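/- arXiv:1803.11332 — 6 statements merged into one kernel-verified Lean document; each statement's English description precedes it below -/
import Mathlib

section
/- Let W⃗ be a Y-valued transition matrix on X. Then the following two sets of Y-indexed families of d×d matrices are equal: (i) the set of all families ( [W_y, A] + F∘W_y + c·W_y )_{y∈Y}, where A ranges over d×d matrices with Aᵀ·u_X = 0, c over ℝ, f over functions X → ℝ, and F∘W_y denotes the matrix with entries (f(x) − f(x'))·W_y(x|x'); (ii) the set of all families ( [W_y, A'] + c·W_y )_{y∈Y}, where A' ranges over d×d matrices with Σ_{x,x'∈X} A'(x,x') = 0 and c over ℝ. Here [M,A] := MA − AM. -/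
/-!
The gradient term is itself a commutator: `F∘W = [diag f, W]`, so `[W, A] + F∘W = [W, A - diag f]`.
As `A` runs over the matrices with zero column sums and `f` over all functions, `A - diag f`
runs over all matrices (take `f` to be minus the column sums). Conversely, an arbitrary matrix
`B` differs from one with zero total sum by a multiple of the identity, which does not change
`[W, B]`.
-/

open Matrix

namespace Matrix

variable {X R : Type*} [Fintype X] [DecidableEq X]

theorem of_sub_mul_eq_diagonal_mul_sub_mul_diagonal [CommRing R] (W : Matrix X X R)
    (f : X → R) :
    of (fun x x' => (f x - f x') * W x x') = diagonal f * W - W * diagonal f := by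
  ext x x'
  simp only [of_apply, sub_apply, diagonal_mul, mul_diagonal]
  ring

theorem exists_transpose_mulVec_one_eq_zero_and_eq_sub_diagonal [Ring R] (B : Matrix X X R) :
    ∃ (A : Matrix X X R) (f : X → R), Aᵀ *ᵥ (fun _ => 1) = 0 ∧ B = A - diagonal f := by
  set f : X → R := fun x' => -∑ x, B x x'
  refine ⟨B + diagonal f, f, ?_, by rw [add_sub_cancel_right]⟩
  funext x'
  simp [f, mulVec, dotProduct, Finset.sum_add_distrib, diagonal_apply]

theorem exists_sum_eq_zero_and_eq_add_smul_one [Field R] [CharZero R] (B : Matrix X X R) :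
    ∃ (B' : Matrix X X R) (t : R), ∑ x, ∑ x', B' x x' = 0 ∧ B = B' + t • 1 := by
  set t : R := (∑ x, ∑ x', B x x') / Fintype.card X
  refine ⟨B - t • 1, t, ?_, by rw [sub_add_cancel]⟩
  have hcard : (Fintype.card X : R) = 0 → ∑ x, ∑ x', B x x' = 0 := fun h => by
    rw [Nat.cast_eq_zero, Fintype.card_eq_zero_iff] at h
    simp
  simp only [sub_apply, smul_apply, one_apply, smul_eq_mul, mul_ite, mul_one, mul_zero,
    Finset.sum_sub_distrib, Finset.sum_ite_eq, Finset.mem_univ, if_true, Finset.sum_const,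
    Finset.card_univ, nsmul_eq_mul]
  rw [mul_comm, div_mul_cancel_of_imp hcard, sub_self]

end Matrix

theorem stmt10_general {X Y : Type*} [Fintype X]
    (W : Y → Matrix X X ℝ) :
    {g : Y → Matrix X X ℝ | ∃ (A : Matrix X X ℝ) (c : ℝ) (f : X → ℝ),
        Aᵀ *ᵥ (fun _ => (1 : ℝ)) = 0 ∧
        g = fun y => (W y * A - A * W y)
          + Matrix.of (fun x x' => (f x - f x') * W y x x') + c • W y}
      = {g : Y → Matrix X X ℝ | ∃ (A' : Matrix X X ℝ) (c : ℝ),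
        (∑ x, ∑ x', A' x x') = 0 ∧
        g = fun y => (W y * A' - A' * W y) + c • W y} := by
  classical
  have commutator_add_gradient : ∀ (A : Matrix X X ℝ) (f : X → ℝ) y,
      W y * A - A * W y + of (fun x x' => (f x - f x') * W y x x')
        = W y * (A - diagonal f) - (A - diagonal f) * W y := fun A f y => by
    rw [of_sub_mul_eq_diagonal_mul_sub_mul_diagonal, mul_sub, sub_mul]
    abel
  ext g
  constructor
  · rintro ⟨A, c, f, -, rfl⟩
    obtain ⟨B', t, hB', hB⟩ := exists_sum_eq_zero_and_eq_add_smul_one (A - diagonal f)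
    refine ⟨B', c, hB', funext fun y => ?_⟩
    rw [commutator_add_gradient, hB, mul_add, add_mul, mul_smul_one, smul_one_mul]
    abel
  · rintro ⟨A', c, -, rfl⟩
    obtain ⟨A, f, hA, hA'⟩ := exists_transpose_mulVec_one_eq_zero_and_eq_sub_diagonal A'
    exact ⟨A, c, f, hA, funext fun y => by rw [commutator_add_gradient, ← hA']⟩

/-- Let `W⃗` be a `Y`-valued transition matrix on `X`.  The set of families
`([W_y, A] + F∘W_y + c • W_y)_y`, with `Aᵀ u_X = 0`, `c ∈ ℝ`, `f : X → ℝ` and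
`(F∘W_y) x x' = (f x − f x') * W_y x x'`, equals the set of families
`([W_y, A'] + c • W_y)_y` with `∑_{x,x'} A' x x' = 0` and `c ∈ ℝ`. -/
theorem stmt10 {X Y : Type*} [Fintype X] [DecidableEq X] [Fintype Y]
    (W : Y → Matrix X X ℝ)
    (hpos : ∀ y x x', 0 ≤ W y x x')
    (hstoch : ∀ x', ∑ x, (∑ y, W y) x x' = 1) :
    {g : Y → Matrix X X ℝ | ∃ (A : Matrix X X ℝ) (c : ℝ) (f : X → ℝ),
        Aᵀ *ᵥ (fun _ => (1 : ℝ)) = 0 ∧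
        g = fun y => (W y * A - A * W y)
          + Matrix.of (fun x x' => (f x - f x') * W y x x') + c • W y}
      = {g : Y → Matrix X X ℝ | ∃ (A' : Matrix X X ℝ) (c : ℝ),
        (∑ x, ∑ x', A' x x') = 0 ∧
        g = fun y => (W y * A' - A' * W y) + c • W y} :=
  stmt10_general W
end

section
/- Let M be a d×d real matrix such that Mᵀ has d distinct real eigenvalues with eigenvectors f_1, …, f_d, and suppose the all-ones vector u decomposes as u = Σ_{j=1}^d a_j f_j with a_j ≠ 0 for every j. Then every d×d matrix A satisfying MA = AM and Aᵀ·u = 0 is the zero matrix. -/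
/-!
Since `Aᵀ` commutes with `Mᵀ`, it preserves each eigenspace of `Mᵀ`; these are lines, because the
eigenvectors `f_j` form a basis with distinct eigenvalues. So `Aᵀ f_j = c_j f_j`, and
`0 = Aᵀ u = ∑ a_j c_j f_j` forces every `c_j` to vanish, as the `a_j` do not.
-/

open Matrix Module

namespace Module.Basis

variable {ι R M : Type*} [CommRing R] [AddCommGroup M] [Module R M]
  (b : Basis ι R M) {T : End R M} {μ : ι → R}

theorem repr_apply_eq_mul_of_apply_eq_smul (hT : ∀ i, T (b i) = μ i • b i) (x : M) (i : ι) :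
    b.repr (T x) i = μ i * b.repr x i := by
  have : b.coord i ∘ₗ T = μ i • b.coord i := b.ext fun j => by
    classical
    simp only [LinearMap.comp_apply, hT, map_smul, LinearMap.smul_apply, coord_apply,
      repr_self, Finsupp.single_apply, smul_eq_mul]
    split_ifs with h <;> simp [h]
  simpa using LinearMap.congr_fun this x

theorem eq_repr_smul_of_mem_eigenspace [IsDomain R] (hμ : Function.Injective μ)
    (hT : ∀ i, T (b i) = μ i • b i) {j : ι} {x : M} (hx : x ∈ T.eigenspace (μ j)) :
    x = b.repr x j • b j := by
  classical
  rw [b.ext_elem_iff]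
  intro i
  simp only [map_smul, repr_self, Finsupp.smul_apply, Finsupp.single_apply, smul_eq_mul]
  split_ifs with hji
  · rw [hji, mul_one]
  · have hμx : μ i * b.repr x i = μ j * b.repr x i := by
      rw [← b.repr_apply_eq_mul_of_apply_eq_smul hT, Module.End.mem_eigenspace_iff.mp hx,
        map_smul, Finsupp.smul_apply, smul_eq_mul]
    have hμij : μ i - μ j ≠ 0 := sub_ne_zero.mpr (hμ.ne (Ne.symm hji))
    rw [mul_zero]
    exact (mul_eq_zero.mp (by linear_combination hμx)).resolve_left hμij

theorem eq_zero_of_commute_of_apply_eq_zero [IsDomain R] (hμ : Function.Injective μ)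
    (hT : ∀ i, T (b i) = μ i • b i) {S : End R M} (hST : Commute S T) {v : M}
    (hv : ∀ i, b.repr v i ≠ 0) (hSv : S v = 0) : S = 0 := by
  set c : ι → R := fun j => b.repr (S (b j)) j
  have hS : ∀ j, S (b j) = c j • b j := fun j => by
    refine b.eq_repr_smul_of_mem_eigenspace hμ hT (Module.End.mem_eigenspace_iff.mpr ?_)
    rw [← Module.End.mul_apply, ← hST.eq, Module.End.mul_apply, hT, map_smul]
  have hc : ∀ j, c j = 0 := fun j => by
    have hSv_j := b.repr_apply_eq_mul_of_apply_eq_smul hS v j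
    rw [hSv, map_zero, Finsupp.zero_apply, eq_comm] at hSv_j
    exact (mul_eq_zero.mp hSv_j).resolve_right (hv j)
  exact b.ext fun j => by rw [hS, hc, zero_smul, LinearMap.zero_apply]

end Module.Basis

theorem stmt12_general {ι : Type*} [Fintype ι]
    (M : Matrix ι ι ℝ) (μ : ι → ℝ) (f : ι → ι → ℝ)
    (hμ : Function.Injective μ)
    (hf : ∀ j, f j ≠ 0)
    (heig : ∀ j, Mᵀ *ᵥ f j = μ j • f j)
    (a : ι → ℝ) (ha : ∀ j, a j ≠ 0)
    (hu : (fun _ => (1 : ℝ)) = ∑ j, a j • f j)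
    (A : Matrix ι ι ℝ)
    (hAM : M * A = A * M)
    (hAu : Aᵀ *ᵥ (fun _ => (1 : ℝ)) = 0) :
    A = 0 := by
  have hli : LinearIndependent ℝ f := Module.End.eigenvectors_linearIndependent'
    Mᵀ.mulVecLin μ hμ f fun j => ⟨Module.End.mem_eigenspace_iff.mpr (heig j), hf j⟩
  let b := basisOfLinearIndependentOfCardEqFinrank' f hli
    (Module.finrank_fintype_fun_eq_card ℝ).symm
  have hb : ⇑b = f := coe_basisOfLinearIndependentOfCardEqFinrank' f hli _
  have hcomm : Commute Aᵀ.mulVecLin Mᵀ.mulVecLin := by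
    rw [Commute, SemiconjBy, Module.End.mul_eq_comp, Module.End.mul_eq_comp,
      ← mulVecLin_mul, ← mulVecLin_mul, ← transpose_mul, ← transpose_mul, hAM]
  have hrepr : ∀ j, b.repr (fun _ => 1) j = a j := fun j => by
    rw [hu, ← hb, b.repr_sum_self]
  have hS : Aᵀ.mulVecLin = 0 := b.eq_zero_of_commute_of_apply_eq_zero hμ
    (by rw [hb]; exact heig) hcomm (fun j => hrepr j ▸ ha j) hAu
  rw [← mulVecLin_zero] at hS
  rw [← transpose_eq_zero]
  exact mulVec_injective (congrArg DFunLike.coe hS)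

/-- Let `M` be a `d × d` real matrix such that `Mᵀ` has `d` distinct real
eigenvalues `μ_j` with eigenvectors `f_j`, and suppose the all-ones vector `u` decomposes
as `u = ∑ j, a_j • f_j` with all `a_j ≠ 0`.  Then every matrix `A` with `M A = A M` and
`Aᵀ u = 0` is zero. -/
theorem stmt12 {ι : Type*} [Fintype ι] [DecidableEq ι]
    (M : Matrix ι ι ℝ) (μ : ι → ℝ) (f : ι → ι → ℝ)
    (hμ : Function.Injective μ)
    (hf : ∀ j, f j ≠ 0)
    (heig : ∀ j, Mᵀ *ᵥ f j = μ j • f j)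
    (a : ι → ℝ) (ha : ∀ j, a j ≠ 0)
    (hu : (fun _ => (1 : ℝ)) = ∑ j, a j • f j)
    (A : Matrix ι ι ℝ)
    (hAM : M * A = A * M)
    (hAu : Aᵀ *ᵥ (fun _ => (1 : ℝ)) = 0) :
    A = 0 :=
  stmt12_general M μ f hμ hf heig a ha hu A hAM hAu
end

section
/- Let (W,V) and (W',V') be independent-type pairs on the same finite sets X, Y. Assume the vectors V_{*,x'} (x' ∈ X) are linearly independent, W is invertible, and there exists an invertible d×d matrix T with Tᵀ·u_X = u_X such that T·W·D(V_y) = W'·D(V'_y)·T for every y ∈ Y. Then T is a permutation matrix; consequently there is a permutation σ of X with W' = T W T⁻¹ and V'(y|σ(x)) = V(y|x) for all y ∈ Y and x ∈ X. -/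
/-!
Summing `T W D(V_y) = W' D(V'_y) T` over `y` gives `T W = W' T`; as `T W` is invertible this
cancels to `T D(V_y) = D(V'_y) T`, i.e. `T r x ≠ 0` forces the column `V_{*,x}` to equal
`V'_{*,r}`. Since the columns of `V` are distinct, each row of `T` has at most one nonzero
entry, and invertibility makes `T` a monomial matrix. The column sums of `T` are `1`, so its
nonzero entries are `1`.
-/

open Matrix

section Intertwining

variable {M : Type*}

theorem mul_eq_mul_of_sum_eq_one [Semiring M] {Y : Type*} [Fintype Y] {T W W' : M}
    {D D' : Y → M} (hD : ∑ y, D y = 1) (hD' : ∑ y, D' y = 1)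
    (h : ∀ y, T * (W * D y) = W' * D' y * T) : T * W = W' * T := by
  calc T * W = ∑ y, T * (W * D y) := by rw [← Finset.mul_sum, ← Finset.mul_sum, hD, mul_one]
    _ = ∑ y, W' * D' y * T := Finset.sum_congr rfl fun y _ => h y
    _ = W' * T := by rw [← Finset.sum_mul, ← Finset.mul_sum, hD', mul_one]

theorem mul_eq_mul_of_mul_mul_eq_of_isUnit [Monoid M] {T W W' D D' : M} [Invertible T]
    (hW : IsUnit W) (hTW : T * W = W' * T) (h : T * (W * D) = W' * D' * T) : T * D = D' * T := by
  have hW' : W' = T * W * ⅟T := by rw [hTW, mul_invOf_cancel_right]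
  have hcancel : T * W * D = T * W * (⅟T * (D' * T)) := by
    rw [mul_assoc, h, hW']
    simp only [mul_assoc]
  rw [((isUnit_of_invertible T).mul hW).mul_left_cancel hcancel, mul_invOf_cancel_left]

end Intertwining

namespace Matrix

variable {n R : Type*}

theorem sum_diagonal_eq_one [Fintype n] [DecidableEq n] [Semiring R] {Y : Type*} [Fintype Y]
    {V : Y → n → R} (hV : ∀ x, ∑ y, V y x = 1) : ∑ y, diagonal (V y) = 1 := by
  ext i j
  rw [sum_apply]
  rcases eq_or_ne i j with rfl | hij
  · simp [hV]
  · simp [hij]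

theorem eq_of_mul_diagonal_eq_diagonal_mul [Fintype n] [DecidableEq n] [CommRing R]
    [NoZeroDivisors R] {T : Matrix n n R} {v v' : n → R} (h : T * diagonal v = diagonal v' * T)
    {r x : n} (hrx : T r x ≠ 0) : v x = v' r := by
  have hentry := congrFun (congrFun h r) x
  rw [mul_diagonal, diagonal_mul, mul_comm (v' r)] at hentry
  exact mul_left_cancel₀ hrx hentry

theorem sum_apply_eq_one_of_transpose_mulVec [Fintype n] [CommSemiring R] {T : Matrix n n R}
    (hT : Tᵀ *ᵥ (fun _ => 1) = fun _ => 1) (x : n) : ∑ r, T r x = 1 := by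
  simpa [mulVec, dotProduct] using congrFun hT x

theorem exists_perm_of_row_subsingleton [Finite n] [Zero R] (T : Matrix n n R)
    (hcol : ∀ x, ∃ r, T r x ≠ 0) (hrow : ∀ r x x', T r x ≠ 0 → T r x' ≠ 0 → x = x') :
    ∃ σ : Equiv.Perm n, ∀ r x, T r x ≠ 0 → r = σ x := by
  choose σ hσ using hcol
  have hinj : σ.Injective := fun x x' hxx' => hrow _ _ _ (hσ x) (hxx' ▸ hσ x')
  have hbij : σ.Bijective := Finite.injective_iff_bijective.mp hinj
  refine ⟨Equiv.ofBijective σ hbij, fun r x hrx => ?_⟩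
  obtain ⟨x', rfl⟩ := hbij.surjective r
  rw [Equiv.ofBijective_apply, hrow _ _ _ hrx (hσ x')]

theorem apply_eq_ite_of_sum_apply_eq_one [Fintype n] [DecidableEq n] [AddCommMonoid R] [One R]
    {T : Matrix n n R} {σ : Equiv.Perm n} (hσ : ∀ r x, T r x ≠ 0 → r = σ x)
    (hsum : ∀ x, ∑ r, T r x = 1) (r x : n) : T r x = if r = σ x then 1 else 0 := by
  have hzero : ∀ r, r ≠ σ x → T r x = 0 := fun r hr => not_not.mp (mt (hσ r x) hr)
  split_ifs with h
  · rw [← hsum x, Finset.sum_eq_single_of_mem r (Finset.mem_univ r) fun r' _ hr' =>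
      hzero r' (h ▸ hr')]
  · exact hzero r h

end Matrix

theorem stmt15_general {X Y : Type*} [Fintype X] [DecidableEq X] [Fintype Y]
    (W W' : Matrix X X ℝ) (V V' : Y → X → ℝ)
    (hVstoch : ∀ x', ∑ y, V y x' = 1)
    (hV'stoch : ∀ x', ∑ y, V' y x' = 1)
    (hind : LinearIndependent ℝ (fun x' : X => fun y : Y => V y x'))
    (hW : IsUnit W)
    (T : Matrix X X ℝ) [Invertible T]
    (hTu : Tᵀ *ᵥ (fun _ => (1 : ℝ)) = fun _ => (1 : ℝ))
    (hTW : ∀ y, T * (W * Matrix.diagonal (V y)) = W' * Matrix.diagonal (V' y) * T) :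
    ∃ σ : Equiv.Perm X,
      (∀ r x, T r x = if r = σ x then 1 else 0) ∧
      W' = T * W * ⅟T ∧
      ∀ y x, V' y (σ x) = V y x := by
  have hTW₁ : T * W = W' * T :=
    mul_eq_mul_of_sum_eq_one (sum_diagonal_eq_one hVstoch) (sum_diagonal_eq_one hV'stoch) hTW
  have hV : ∀ r x, T r x ≠ 0 → ∀ y, V y x = V' y r := fun r x hrx y =>
    eq_of_mul_diagonal_eq_diagonal_mul (mul_eq_mul_of_mul_mul_eq_of_isUnit hW hTW₁ (hTW y)) hrx
  have hdet : T.det ≠ 0 := (isUnit_det_of_invertible T).ne_zero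
  obtain ⟨σ, hσ⟩ := T.exists_perm_of_row_subsingleton
    (fun x => not_forall.mp fun h => hdet (det_eq_zero_of_column_eq_zero x h))
    fun r x x' hx hx' =>
      hind.injective <| funext fun y => (hV r x hx y).trans (hV r x' hx' y).symm
  have hTσ := apply_eq_ite_of_sum_apply_eq_one hσ (sum_apply_eq_one_of_transpose_mulVec hTu)
  refine ⟨σ, hTσ, by rw [hTW₁, mul_invOf_cancel_right], fun y x => ?_⟩
  exact (hV (σ x) x (by simp [hTσ]) y).symm

/-- Let `(W,V)` and `(W',V')` be independent-type pairs on `X`, `Y`.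
Assume the vectors `V_{*,x'}` are linearly independent, `W` is invertible, and there is an
invertible matrix `T` with `Tᵀ u_X = u_X` and `T W D(V_y) = W' D(V'_y) T` for every `y`.
Then `T` is a permutation matrix: there is a permutation `σ` of `X` with
`T r x = δ_{r, σ x}`, `W' = T W T⁻¹` and `V'(y | σ x) = V(y | x)`. -/
theorem stmt15 {X Y : Type*} [Fintype X] [DecidableEq X] [Fintype Y]
    (W W' : Matrix X X ℝ) (V V' : Y → X → ℝ)
    (hWpos : ∀ x x', 0 ≤ W x x') (hWstoch : ∀ x', ∑ x, W x x' = 1)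
    (hW'pos : ∀ x x', 0 ≤ W' x x') (hW'stoch : ∀ x', ∑ x, W' x x' = 1)
    (hVpos : ∀ y x', 0 ≤ V y x') (hVstoch : ∀ x', ∑ y, V y x' = 1)
    (hV'pos : ∀ y x', 0 ≤ V' y x') (hV'stoch : ∀ x', ∑ y, V' y x' = 1)
    (hind : LinearIndependent ℝ (fun x' : X => fun y : Y => V y x'))
    (hW : IsUnit W)
    (T : Matrix X X ℝ) [Invertible T]
    (hTu : Tᵀ *ᵥ (fun _ => (1 : ℝ)) = fun _ => (1 : ℝ))
    (hTW : ∀ y, T * (W * Matrix.diagonal (V y)) = W' * Matrix.diagonal (V' y) * T) :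
    ∃ σ : Equiv.Perm X,
      (∀ r x, T r x = if r = σ x then 1 else 0) ∧
      W' = T * W * ⅟T ∧
      ∀ y x, V' y (σ x) = V y x :=
  stmt15_general W W' V V' hVstoch hV'stoch hind hW T hTu hTW
end

section
/- Let W⃗ be a Y-valued transition matrix on X with |W⃗| invertible. Suppose there exist a column-stochastic d×d matrix W, a transition matrix V from X to Y, and an invertible d×d matrix T such that T·W_y = W·D(V_y)·T for every y ∈ Y. Then T·|W⃗| = W·T, and for each i ∈ X the i-th column v_i of T⁻¹ is a common eigenvector of all the matrices U_y := |W⃗|⁻¹·W_y with U_y·v_i = V(y|i)·v_i; in particular every U_y is diagonalizable over ℝ with nonnegative real eigenvalues. -/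
open Matrix

/-! Summing `T W_y = W D(V_y) T` over `y`, the diagonals add up to the identity because `V` is
stochastic, which gives `T |W⃗| = W T`. Hence `|W⃗|⁻¹ W_y` is similar to `D(V_y)` via `T`:
`|W⃗|⁻¹ W_y T⁻¹ = T⁻¹ D(V_y)`, and reading this column by column says that the `i`-th column of
`T⁻¹` is an eigenvector for the eigenvalue `V(y|i)`. -/

theorem mul_sum_eq_of_forall_mul_eq_mul_mul {R ι : Type*} [Semiring R] (s : Finset ι)
    {T M : R} {A D : ι → R} (hD : ∑ i ∈ s, D i = 1) (h : ∀ i ∈ s, T * A i = M * D i * T) :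
    T * ∑ i ∈ s, A i = M * T :=
  calc T * ∑ i ∈ s, A i = ∑ i ∈ s, M * D i * T := by
        rw [Finset.mul_sum]; exact Finset.sum_congr rfl h
    _ = M * T := by rw [← Finset.sum_mul, ← Finset.mul_sum, hD, mul_one]

namespace Matrix

variable {m n ι R : Type*} [DecidableEq n]

theorem sum_diagonal_eq_one_s16 [Fintype ι] [Semiring R] {d : ι → n → R}
    (hd : ∀ j, ∑ i, d i j = 1) : ∑ i, diagonal (d i) = 1 := by
  ext j k
  rcases eq_or_ne j k with rfl | hjk <;> simp [sum_apply, *]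

variable [Fintype n]

theorem mulVec_col_of_mul_eq_mul_diagonal [Fintype m] [CommSemiring R] {A : Matrix m m R}
    {P : Matrix m n R} {d : n → R} (h : A * P = P * diagonal d) (i : n) :
    A *ᵥ P.col i = d i • P.col i := by
  ext r
  have hri := congrFun (congrFun h r) i
  rw [mul_apply, mul_diagonal] at hri
  simp [mulVec, dotProduct, col_apply, hri, mul_comm]

theorem nonsing_inv_mul_mul_invOf_eq_of_intertwines [CommRing R] {S A M D T : Matrix n n R}
    [Invertible T] (hS : IsUnit S) (hTS : T * S = M * T) (hTA : T * A = M * D * T) :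
    S⁻¹ * A * ⅟T = ⅟T * D := by
  have hSM : S * ⅟T = ⅟T * M := by
    rw [← Matrix.invOf_mul_cancel_left T (S * ⅟T), ← mul_assoc T, hTS,
      Matrix.mul_invOf_cancel_right]
  have hAM : A * ⅟T = ⅟T * M * D := by
    rw [← Matrix.invOf_mul_cancel_left T (A * ⅟T), ← mul_assoc T, hTA,
      Matrix.mul_invOf_cancel_right, mul_assoc]
  rw [mul_assoc, hAM, ← hSM, mul_assoc, nonsing_inv_mul_cancel_left _ _
    ((isUnit_iff_isUnit_det S).mp hS)]

end Matrix

theorem stmt16_general {X Y : Type*} [Fintype X] [DecidableEq X] [Fintype Y]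
    (W : Y → Matrix X X ℝ)
    (hS : IsUnit (∑ y, W y))
    (Wm : Matrix X X ℝ)
    (V : Y → X → ℝ)
    (hVpos : ∀ y x', 0 ≤ V y x') (hVstoch : ∀ x', ∑ y, V y x' = 1)
    (T : Matrix X X ℝ) [Invertible T]
    (hTW : ∀ y, T * W y = Wm * Matrix.diagonal (V y) * T) :
    T * (∑ y, W y) = Wm * T ∧
    (∀ (y : Y) (i : X),
      ((∑ y', W y')⁻¹ * W y) *ᵥ (fun r => (⅟T) r i)
        = V y i • fun r => (⅟T) r i) ∧
    LinearIndependent ℝ (fun i : X => fun r => (⅟T) r i) ∧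
    (∀ (y : Y) (i : X), 0 ≤ V y i) := by
  have hTS : T * ∑ y, W y = Wm * T :=
    mul_sum_eq_of_forall_mul_eq_mul_mul _ (sum_diagonal_eq_one_s16 hVstoch) fun y _ => hTW y
  refine ⟨hTS, fun y i => ?_, linearIndependent_cols_of_invertible (⅟T), hVpos⟩
  exact mulVec_col_of_mul_eq_mul_diagonal
    (nonsing_inv_mul_mul_invOf_eq_of_intertwines hS hTS (hTW y)) i

/-- Let `W⃗` be a `Y`-valued transition matrix on `X` with `|W⃗| = ∑ y, W y`
invertible.  Suppose there are a column-stochastic matrix `Wm`, a transition matrix `V`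
from `X` to `Y`, and an invertible matrix `T` with `T W_y = Wm D(V_y) T` for every `y`.
Then `T |W⃗| = Wm T`, and for each `i` the `i`-th column of `T⁻¹` is a common eigenvector
of all `U_y := |W⃗|⁻¹ W_y` with `U_y v_i = V(y|i) • v_i`; the columns of `T⁻¹` are linearly
independent (so every `U_y` is diagonalizable over `ℝ`) and the eigenvalues `V(y|i)` are
nonnegative. -/
theorem stmt16 {X Y : Type*} [Fintype X] [DecidableEq X] [Fintype Y]
    (W : Y → Matrix X X ℝ)
    (hpos : ∀ y x x', 0 ≤ W y x x')
    (hstoch : ∀ x', ∑ x, (∑ y, W y) x x' = 1)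
    (hS : IsUnit (∑ y, W y))
    (Wm : Matrix X X ℝ)
    (hWmpos : ∀ x x', 0 ≤ Wm x x') (hWmstoch : ∀ x', ∑ x, Wm x x' = 1)
    (V : Y → X → ℝ)
    (hVpos : ∀ y x', 0 ≤ V y x') (hVstoch : ∀ x', ∑ y, V y x' = 1)
    (T : Matrix X X ℝ) [Invertible T]
    (hTW : ∀ y, T * W y = Wm * Matrix.diagonal (V y) * T) :
    T * (∑ y, W y) = Wm * T ∧
    (∀ (y : Y) (i : X),
      ((∑ y', W y')⁻¹ * W y) *ᵥ (fun r => (⅟T) r i)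
        = V y i • fun r => (⅟T) r i) ∧
    LinearIndependent ℝ (fun i : X => fun r => (⅟T) r i) ∧
    (∀ (y : Y) (i : X), 0 ≤ V y i) :=
  stmt16_general W hS Wm V hVpos hVstoch T hTW
end

section
/- Let (W,V) be an independent-type pair on X, Y. Let B be a d×d matrix with Bᵀ·u_X = 0 and let (C_y)_{y∈Y} be vectors in ℝ^X with Σ_{y∈Y} C_y = 0. Then the following are equivalent: (i) there exists a d×d matrix A with Aᵀ·u_X = 0 such that W·D(V_y)·A − A·W·D(V_y) = B·D(V_y) + W·D(C_y) for every y ∈ Y; (ii) there exists a d×d matrix A with Aᵀ·u_X = 0 such that B = [W,A] and W·[D(V_y),A] = W·D(C_y) for every y ∈ Y. -/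
/-!
Both systems are statements about the matrices `d_y = D(V_y)` and `c_y = D(C_y)`, which satisfy
`∑ y, d_y = 1` and `∑ y, c_y = 0`. Summing the equations of (i) over `y` gives `B = [W, A]`, and
`W d A - A W d = W [d, A] + [W, A] d` shows that, given `B = [W, A]`, the `y`-th equations of
(i) and (ii) are the same. Only ring arithmetic is involved, so the equivalence holds in any ring.
-/

open Matrix

theorem mul_commutator_add_commutator_mul {R : Type*} [Ring R] (W d A : R) :
    W * (d * A - A * d) + (W * A - A * W) * d = W * d * A - A * (W * d) := by
  noncomm_ring

theorem forall_mul_sub_mul_eq_iff_of_sum_eq {R Y : Type*} [Ring R] [Fintype Y]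
    (W A B : R) (d c : Y → R) (hd : ∑ y, d y = 1) (hc : ∑ y, c y = 0) :
    (∀ y, W * d y * A - A * (W * d y) = B * d y + W * c y) ↔
      B = W * A - A * W ∧ ∀ y, W * (d y * A - A * d y) = W * c y := by
  constructor
  · intro h
    have hB : W * A - A * W = B := by
      have hsum := Finset.sum_congr rfl fun y (_ : y ∈ Finset.univ) => h y
      rwa [Finset.sum_sub_distrib, Finset.sum_add_distrib, ← Finset.sum_mul, ← Finset.mul_sum,
        ← Finset.mul_sum, ← Finset.mul_sum, ← Finset.mul_sum, ← Finset.mul_sum, hd, hc,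
        mul_one, mul_one, mul_zero, add_zero] at hsum
    refine ⟨hB.symm, fun y => ?_⟩
    have := mul_commutator_add_commutator_mul W (d y) A
    rw [h y, hB] at this
    exact add_right_cancel (this.trans (add_comm _ _))
  · rintro ⟨rfl, h⟩ y
    rw [← mul_commutator_add_commutator_mul, h y, add_comm]

theorem sum_diagonal {X Y α : Type*} [DecidableEq X] [AddCommMonoid α] [Fintype Y]
    (v : Y → X → α) : ∑ y, diagonal (v y) = diagonal (∑ y, v y) :=
  (map_sum (diagonalAddMonoidHom X α) v Finset.univ).symm

theorem stmt17_general {X Y : Type*} [Fintype X] [DecidableEq X] [Fintype Y]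
    (W : Matrix X X ℝ) (V : Y → X → ℝ)
    (hVstoch : ∀ x', ∑ y, V y x' = 1)
    (B : Matrix X X ℝ)
    (C : Y → X → ℝ) (hC : ∑ y, C y = 0) :
    (∃ A : Matrix X X ℝ, Aᵀ *ᵥ (fun _ => (1 : ℝ)) = 0 ∧
      ∀ y, W * Matrix.diagonal (V y) * A - A * (W * Matrix.diagonal (V y))
        = B * Matrix.diagonal (V y) + W * Matrix.diagonal (C y)) ↔
    (∃ A : Matrix X X ℝ, Aᵀ *ᵥ (fun _ => (1 : ℝ)) = 0 ∧
      B = W * A - A * W ∧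
      ∀ y, W * (Matrix.diagonal (V y) * A - A * Matrix.diagonal (V y))
        = W * Matrix.diagonal (C y)) := by
  have hV : ∑ y, diagonal (V y) = 1 := by
    rw [sum_diagonal, show ∑ y, V y = 1 from funext fun x => by simpa using hVstoch x]
    exact diagonal_one
  have hC' : ∑ y, diagonal (C y) = 0 := by
    rw [sum_diagonal, hC]
    exact diagonal_zero
  refine exists_congr fun A => and_congr_right fun _ => ?_
  exact forall_mul_sub_mul_eq_iff_of_sum_eq W A B _ _ hV hC'

/-- Let `(W,V)` be an independent-type pair on `X`, `Y`, `B` a matrix with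
`Bᵀ u_X = 0`, and `(C_y)` vectors with `∑ y, C_y = 0`.  Then the following are equivalent:
(i) there is a matrix `A` with `Aᵀ u_X = 0` and
`W D(V_y) A − A W D(V_y) = B D(V_y) + W D(C_y)` for every `y`;
(ii) there is a matrix `A` with `Aᵀ u_X = 0`, `B = [W, A]` and
`W [D(V_y), A] = W D(C_y)` for every `y`. -/
theorem stmt17 {X Y : Type*} [Fintype X] [DecidableEq X] [Fintype Y]
    (W : Matrix X X ℝ) (V : Y → X → ℝ)
    (hWpos : ∀ x x', 0 ≤ W x x') (hWstoch : ∀ x', ∑ x, W x x' = 1)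
    (hVpos : ∀ y x', 0 ≤ V y x') (hVstoch : ∀ x', ∑ y, V y x' = 1)
    (B : Matrix X X ℝ) (hB : Bᵀ *ᵥ (fun _ => (1 : ℝ)) = 0)
    (C : Y → X → ℝ) (hC : ∑ y, C y = 0) :
    (∃ A : Matrix X X ℝ, Aᵀ *ᵥ (fun _ => (1 : ℝ)) = 0 ∧
      ∀ y, W * Matrix.diagonal (V y) * A - A * (W * Matrix.diagonal (V y))
        = B * Matrix.diagonal (V y) + W * Matrix.diagonal (C y)) ↔
    (∃ A : Matrix X X ℝ, Aᵀ *ᵥ (fun _ => (1 : ℝ)) = 0 ∧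
      B = W * A - A * W ∧
      ∀ y, W * (Matrix.diagonal (V y) * A - A * Matrix.diagonal (V y))
        = W * Matrix.diagonal (C y)) :=
  stmt17_general W V hVstoch B C hC
end

section
/- Let (W,V) be an independent-type pair on X, Y with W invertible. For x ∈ X let S(V)_x := { x' ∈ X : V_{*,x'} = V_{*,x} } and let I_{S(V)_x} denote the diagonal 0–1 matrix projecting onto the coordinates in S(V)_x. Let B be a d×d matrix with Bᵀ·u_X = 0 and (C_y)_{y∈Y} vectors with Σ_{y∈Y} C_y = 0. Then there exists a matrix A with Aᵀ·u_X = 0 and W·D(V_y)·A − A·W·D(V_y) = B·D(V_y) + W·D(C_y) for every y ∈ Y, if and only if C_y = 0 for every y and B = [W,A'] for some matrix A' with A'ᵀ·u_X = 0 and [I_{S(V)_x}, A'] = 0 for every x ∈ X. -/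
/-!
Summing the identities over `y` uses `∑_y D(V_y) = 1` and `∑_y C_y = 0` to give `B = [W, A]`;
substituting back and cancelling the invertible `W` leaves `[D(V_y), A] = D(C_y)`. The commutator
of a diagonal matrix `D(d)` with `A` has entries `(d i - d j) A i j`, so it vanishes on the
diagonal, forcing `C_y = 0`, and `A` commutes with every `D(V_y)` exactly when `A i j = 0` whenever
the columns `V_{*,i}` and `V_{*,j}` differ, which is also what commuting with the projectors
`I_{S(V)_x}` onto the level sets of `x ↦ V_{*,x}` means.
-/

open Matrix

namespace Matrix

variable {n R : Type*} [DecidableEq n]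

theorem sum_diagonal {ι : Type*} [Fintype ι] [AddCommMonoid R] (d : ι → n → R) :
    ∑ y, diagonal (d y) = diagonal (∑ y, d y) :=
  (map_sum (diagonalAddMonoidHom n R) d Finset.univ).symm

variable [Fintype n]

theorem diagonal_mul_sub_mul_diagonal_apply [CommRing R] (d : n → R) (A : Matrix n n R)
    (i j : n) : (diagonal d * A - A * diagonal d) i j = (d i - d j) * A i j := by
  rw [sub_apply, diagonal_mul, mul_diagonal]
  ring

theorem commute_diagonal_iff [CommRing R] [NoZeroDivisors R] {d : n → R} {A : Matrix n n R} :
    Commute (diagonal d) A ↔ ∀ i j, d i ≠ d j → A i j = 0 := by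
  rw [commute_iff_eq, ← sub_eq_zero]
  refine ⟨fun h i j hij => ?_, fun h => ext fun i j => ?_⟩
  · have hij' := congrFun₂ h i j
    rw [diagonal_mul_sub_mul_diagonal_apply, zero_apply] at hij'
    exact (mul_eq_zero.1 hij').resolve_left (sub_ne_zero.2 hij)
  · rw [diagonal_mul_sub_mul_diagonal_apply, zero_apply]
    by_cases hij : d i = d j
    · rw [hij, sub_self, zero_mul]
    · rw [h i j hij, mul_zero]

theorem diagonal_mul_sub_mul_diagonal_eq_diagonal_iff [CommRing R] {d c : n → R}
    {A : Matrix n n R} :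
    diagonal d * A - A * diagonal d = diagonal c ↔ c = 0 ∧ Commute (diagonal d) A := by
  constructor
  · intro h
    have hc : c = 0 := funext fun i => by
      have hii := congrFun₂ h i i
      rwa [diagonal_mul_sub_mul_diagonal_apply, sub_self, zero_mul, diagonal_apply_eq,
        eq_comm] at hii
    rw [hc, diagonal_zero', sub_eq_zero] at h
    exact ⟨hc, h⟩
  · rintro ⟨rfl, h⟩
    rw [diagonal_zero', sub_eq_zero]
    exact h

theorem forall_commute_diagonal_iff {ι : Type*} [CommRing R] [NoZeroDivisors R]
    {V : ι → n → R} {A : Matrix n n R} :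
    (∀ y, Commute (diagonal (V y)) A) ↔
      ∀ i j, (fun y => V y i) ≠ (fun y => V y j) → A i j = 0 := by
  simp_rw [commute_diagonal_iff]
  refine ⟨fun h i j hij => ?_, fun h y i j hij => h i j fun hV => hij (congrFun hV y)⟩
  obtain ⟨y, hy⟩ := Function.ne_iff.1 hij
  exact h y i j hy

theorem forall_commute_diagonal_indicator_fiber_iff {Z : Type*} [CommRing R] [Nontrivial R]
    [NoZeroDivisors R] (f : n → Z) {A : Matrix n n R} :
    (∀ x, Commute (diagonal ({x' | f x' = f x}.indicator fun _ => 1)) A) ↔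
      ∀ i j, f i ≠ f j → A i j = 0 := by
  simp_rw [commute_diagonal_iff]
  constructor
  · intro h i j hij
    refine h i i j ?_
    rw [Set.indicator_of_mem (s := {x' | f x' = f i}) rfl,
      Set.indicator_of_notMem (s := {x' | f x' = f i}) hij.symm]
    exact one_ne_zero
  · intro h x i j hind
    refine h i j fun hij => hind ?_
    classical
    simp only [Set.indicator_apply, Set.mem_ofPred_eq, hij]

theorem forall_commutator_mul_diagonal_eq_iff {ι : Type*} [Fintype ι] [CommRing R]
    {W A B : Matrix n n R} {V C : ι → n → R}
    (hV : ∑ y, V y = 1) (hC : ∑ y, C y = 0) (hW : IsUnit W) :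
    (∀ y, W * diagonal (V y) * A - A * (W * diagonal (V y)) =
        B * diagonal (V y) + W * diagonal (C y)) ↔
      B = W * A - A * W ∧ ∀ y, diagonal (V y) * A - A * diagonal (V y) = diagonal (C y) := by
  constructor
  · intro h
    have hB : B = W * A - A * W := by
      have hsum := Finset.sum_congr rfl fun y (_ : y ∈ Finset.univ) => h y
      simpa [Finset.sum_sub_distrib, Finset.sum_add_distrib, ← Finset.mul_sum, ← Finset.sum_mul,
        sum_diagonal, hV, hC] using hsum.symm
    refine ⟨hB, fun y => ?_⟩
    have hWy : W * (diagonal (V y) * A - A * diagonal (V y) - diagonal (C y)) = W * 0 := by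
      have hy := h y
      rw [hB] at hy
      linear_combination (norm := noncomm_ring) hy
    exact sub_eq_zero.1 (hW.mul_left_cancel hWy)
  · rintro ⟨rfl, h⟩ y
    rw [← h y]
    noncomm_ring

end Matrix

theorem stmt18_general {X Y : Type*} [Fintype X] [DecidableEq X] [Fintype Y]
    (W : Matrix X X ℝ) (V : Y → X → ℝ)
    (hVstoch : ∀ x', ∑ y, V y x' = 1)
    (hW : IsUnit W)
    (B : Matrix X X ℝ)
    (C : Y → X → ℝ) (hC : ∑ y, C y = 0) :
    (∃ A : Matrix X X ℝ, Aᵀ *ᵥ (fun _ => (1 : ℝ)) = 0 ∧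
      ∀ y, W * Matrix.diagonal (V y) * A - A * (W * Matrix.diagonal (V y))
        = B * Matrix.diagonal (V y) + W * Matrix.diagonal (C y)) ↔
    ((∀ y, C y = 0) ∧
      ∃ A' : Matrix X X ℝ, A'ᵀ *ᵥ (fun _ => (1 : ℝ)) = 0 ∧
        B = W * A' - A' * W ∧
        ∀ x : X,
          Matrix.diagonal ({x' : X | (fun y => V y x') = fun y => V y x}.indicator
              fun _ => (1 : ℝ)) * A'
            = A' * Matrix.diagonal
              ({x' : X | (fun y => V y x') = fun y => V y x}.indicator
                fun _ => (1 : ℝ))) := by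
  have hV : ∑ y, V y = 1 := funext fun x => by simpa [Finset.sum_apply] using hVstoch x
  have hcomm : ∀ A : Matrix X X ℝ, (∀ y, Commute (diagonal (V y)) A) ↔
      ∀ x, Commute (diagonal ({x' : X | (fun y => V y x') = fun y => V y x}.indicator
        fun _ => (1 : ℝ))) A := fun A =>
    forall_commute_diagonal_iff.trans
      (forall_commute_diagonal_indicator_fiber_iff fun x' y => V y x').symm
  simp_rw [forall_commutator_mul_diagonal_eq_iff hV hC hW,
    diagonal_mul_sub_mul_diagonal_eq_diagonal_iff, forall_and]
  constructor
  · rintro ⟨A, hA, hBA, hC0, hAV⟩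
    exact ⟨hC0, A, hA, hBA, (hcomm A).1 hAV⟩
  · rintro ⟨hC0, A, hA, hBA, hAS⟩
    exact ⟨A, hA, hBA, hC0, (hcomm A).2 hAS⟩

/-- Let `(W,V)` be an independent-type pair on `X`, `Y` with `W` invertible.
For `x ∈ X` let `S(V)_x = {x' | V_{*,x'} = V_{*,x}}` and `I_{S(V)_x}` the diagonal `0–1`
projector onto the coordinates in `S(V)_x`.  Let `B` satisfy `Bᵀ u_X = 0` and `(C_y)`
satisfy `∑ y, C_y = 0`.  Then there is a matrix `A` with `Aᵀ u_X = 0` and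
`W D(V_y) A − A W D(V_y) = B D(V_y) + W D(C_y)` for every `y`, if and only if `C_y = 0`
for every `y` and `B = [W, A']` for some `A'` with `A'ᵀ u_X = 0` and
`[I_{S(V)_x}, A'] = 0` for every `x`. -/
theorem stmt18 {X Y : Type*} [Fintype X] [DecidableEq X] [Fintype Y]
    (W : Matrix X X ℝ) (V : Y → X → ℝ)
    (hWpos : ∀ x x', 0 ≤ W x x') (hWstoch : ∀ x', ∑ x, W x x' = 1)
    (hVpos : ∀ y x', 0 ≤ V y x') (hVstoch : ∀ x', ∑ y, V y x' = 1)
    (hW : IsUnit W)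
    (B : Matrix X X ℝ) (hB : Bᵀ *ᵥ (fun _ => (1 : ℝ)) = 0)
    (C : Y → X → ℝ) (hC : ∑ y, C y = 0) :
    (∃ A : Matrix X X ℝ, Aᵀ *ᵥ (fun _ => (1 : ℝ)) = 0 ∧
      ∀ y, W * Matrix.diagonal (V y) * A - A * (W * Matrix.diagonal (V y))
        = B * Matrix.diagonal (V y) + W * Matrix.diagonal (C y)) ↔
    ((∀ y, C y = 0) ∧
      ∃ A' : Matrix X X ℝ, A'ᵀ *ᵥ (fun _ => (1 : ℝ)) = 0 ∧
        B = W * A' - A' * W ∧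
        ∀ x : X,
          Matrix.diagonal ({x' : X | (fun y => V y x') = fun y => V y x}.indicator
              fun _ => (1 : ℝ)) * A'
            = A' * Matrix.diagonal
              ({x' : X | (fun y => V y x') = fun y => V y x}.indicator
                fun _ => (1 : ℝ))) :=
  stmt18_general W V hVstoch hW B C hC
end
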